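/- Let (U, W, B) be a linear system over ℂ with U ≠ 0. The center of the Mackey Lie algebra gl^M_{U,W} is one-dimensional and equals ℂ · id_U: an element φ ∈ gl^M_{U,W} commutes with every element of gl^M_{U,W} if and only if φ is a scalar multiple of the identity of U. -/

import Mathlib

open TensorProduct

attribute [local instance 100] LieRing.ofAssociativeRing

variable {U W : Type*} [AddCommGroup U] [Module ℂ U] [AddCommGroup W] [Module ℂ W]

/-- The Mackey Lie algebra `gl^M_{U,W}`: all `φ ∈ End ℂ U` whose dual map preserves
`W̃ = range (B.flip) ⊆ U*`. -/
noncomputable def glMackey (B : U →ₗ[ℂ] W →ₗ[ℂ] ℂ) :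
    LieSubalgebra ℂ (Module.End ℂ U) where
  carrier := {φ | ∀ ξ ∈ LinearMap.range B.flip, φ.dualMap ξ ∈ LinearMap.range B.flip}
  add_mem' := by
    intro a b ha hb ξ hξ
    have h : (a + b).dualMap ξ = a.dualMap ξ + b.dualMap ξ := by ext x; simp
    rw [h]
    exact Submodule.add_mem _ (ha ξ hξ) (hb ξ hξ)
  zero_mem' := by
    intro ξ hξ
    have h : (0 : Module.End ℂ U).dualMap ξ = 0 := by ext x; simp
    rw [h]; exact Submodule.zero_mem _
  smul_mem' := by
    intro c a ha ξ hξ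
    have h : (c • a).dualMap ξ = c • a.dualMap ξ := by ext x; simp
    rw [h]
    exact Submodule.smul_mem _ _ (ha ξ hξ)
  lie_mem' := by
    intro a b ha hb ξ hξ
    have h : (⁅a, b⁆ : Module.End ℂ U).dualMap ξ
        = b.dualMap (a.dualMap ξ) - a.dualMap (b.dualMap ξ) := by
      ext x; simp [Module.End.lie_apply]
    rw [h]
    exact Submodule.sub_mem _ (hb _ (ha ξ hξ)) (ha _ (hb ξ hξ))

/-!
An element of the center commutes with every rank-one operator `u ↦ B(u, w) • v`, and these
all lie in `gl^M_{U,W}` since the dual of such an operator sends `ξ` to `ξ(v) • B(·, w)`.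
Evaluating `φ ∘ (B(·, w) • v) = B(·, w) • v ∘ φ` at a point `u₀` with `B(u₀, w) ≠ 0` gives
`B(u₀, w) • φ v = B(φ u₀, w) • v` for every `v`, so `φ` is a scalar.
-/

theorem Module.End.exists_eq_smul_one_of_forall_commute_smulRight {K V : Type*} [Field K]
    [AddCommGroup V] [Module K V] {φ : Module.End K V} {f : Module.Dual K V} (hf : f ≠ 0)
    (h : ∀ v, Commute φ (f.smulRight v)) : ∃ c : K, φ = c • 1 := by
  obtain ⟨u₀, hu₀⟩ := DFunLike.ne_iff.mp hf
  refine ⟨f (φ u₀) / f u₀, LinearMap.ext fun v => ?_⟩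
  have key : f u₀ • φ v = f (φ u₀) • v := by
    simpa using LinearMap.congr_fun (h v).eq u₀
  rw [LinearMap.smul_apply, Module.End.one_apply, div_eq_inv_mul, mul_smul, ← key,
    inv_smul_smul₀ (by simpa using hu₀)]

theorem smulRight_flip_mem_glMackey (B : U →ₗ[ℂ] W →ₗ[ℂ] ℂ) (w : W) (v : U) :
    (B.flip w).smulRight v ∈ glMackey B := by
  rintro ξ -
  exact ⟨ξ v • w, LinearMap.ext fun u => by simp [mul_comm]⟩

theorem exists_flip_ne_zero [Nontrivial U] {B : U →ₗ[ℂ] W →ₗ[ℂ] ℂ}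
    (hB : ∀ u : U, (∀ w : W, B u w = 0) → u = 0) : ∃ w : W, B.flip w ≠ 0 := by
  obtain ⟨u, hu⟩ := exists_ne (0 : U)
  by_contra! h
  exact hu (hB u fun w => by simpa using LinearMap.congr_fun (h w) u)

theorem stmt_9_general [Nontrivial U] (B : U →ₗ[ℂ] W →ₗ[ℂ] ℂ)
    (hB1 : ∀ u : U, (∀ w : W, B u w = 0) → u = 0) :
    ∀ φ ∈ glMackey B,
      ((∀ ψ ∈ glMackey B, φ * ψ = ψ * φ) ↔
        ∃ c : ℂ, φ = c • (1 : Module.End ℂ U)) := by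
  intro φ _
  constructor
  · intro hcomm
    obtain ⟨w, hw⟩ := exists_flip_ne_zero hB1
    exact Module.End.exists_eq_smul_one_of_forall_commute_smulRight hw
      fun v => hcomm _ (smulRight_flip_mem_glMackey B w v)
  · rintro ⟨c, rfl⟩ ψ -
    rw [smul_one_mul, mul_smul_one]

/-- For a linear system `(U, W, B)` with `U ≠ 0`, the center of the Mackey Lie algebra
`gl^M_{U,W}` is exactly `ℂ · id_U`: an element of `gl^M_{U,W}` commutes with every
element of `gl^M_{U,W}` iff it is a scalar multiple of the identity. -/
theorem stmt_9 [Nontrivial U] (B : U →ₗ[ℂ] W →ₗ[ℂ] ℂ)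
    (hB1 : ∀ u : U, (∀ w : W, B u w = 0) → u = 0)
    (hB2 : ∀ w : W, (∀ u : U, B u w = 0) → w = 0) :
    ∀ φ ∈ glMackey B,
      ((∀ ψ ∈ glMackey B, φ * ψ = ψ * φ) ↔
        ∃ c : ℂ, φ = c • (1 : Module.End ℂ U)) :=
  stmt_9_general B hB1
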